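/- Let G be a G-formula and let Γ be a multiset of D-formulas. If the sequent Γ → G has an I_G-proof (containing no occurrences of the ∨-L rule), then it has an O_G-proof. -/

import Mathlib

set_option maxHeartbeats 1000000

/-- Terms of a first-order language: variables (de Bruijn indices for
quantified variables) and constants. -/
inductive Tm : Type
  | var : ℕ → Tm
  | const : ℕ → Tm

namespace Tm

/-- Substitution of the term `u` for the variable with index `k`. -/
def subst (k : ℕ) (u : Tm) : Tm → Tm
  | var n => if n = k then u else var n
  | const c => const c

/-- The constant `c` occurs in a term. -/
def constIn (c : ℕ) : Tm → Prop
  | var _ => False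
  | const d => d = c

end Tm

/-- First-order formulas over the primitives ⊤, ⊥, ∧, ∨, ⊃, ∃, ∀.
Quantifiers are represented with de Bruijn indices. -/
inductive Fm : Type
  | top : Fm
  | bot : Fm
  | atom : ℕ → List Tm → Fm
  | conj : Fm → Fm → Fm
  | disj : Fm → Fm → Fm
  | imp : Fm → Fm → Fm
  | ex : Fm → Fm
  | all : Fm → Fm

namespace Fm

/-- Substitution of a term for the variable with de Bruijn index `k`. -/
def subst (k : ℕ) (u : Tm) : Fm → Fm
  | top => top
  | bot => bot
  | atom p ts => atom p (ts.map (Tm.subst k u))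
  | conj a b => conj (subst k u a) (subst k u b)
  | disj a b => disj (subst k u a) (subst k u b)
  | imp a b => imp (subst k u a) (subst k u b)
  | ex a => ex (subst (k + 1) u a)
  | all a => all (subst (k + 1) u a)

/-- `[t/x]B`: instantiation of the outermost bound variable of the body of a
quantified formula with the term `u`. -/
def inst (u : Tm) (a : Fm) : Fm := subst 0 u a

/-- Atomic formulas (⊤ and ⊥ are *not* atomic). -/
def isAtom : Fm → Prop
  | atom _ _ => True
  | _ => False

/-- Formulas that need no right-introduction rule in a uniform/O_G proof:
atomic formulas and ⊥. -/
def neutral (F : Fm) : Prop := F.isAtom ∨ F = bot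

/-- The constant `c` occurs in a formula. -/
def constIn (c : ℕ) : Fm → Prop
  | top => False
  | bot => False
  | atom _ ts => ∃ t ∈ ts, t.constIn c
  | conj a b => constIn c a ∨ constIn c b
  | disj a b => constIn c a ∨ constIn c b
  | imp a b => constIn c a ∨ constIn c b
  | ex a => constIn c a
  | all a => constIn c a

end Fm

/-- The eigenvariable (constant) `c` does not occur in the sequent `Γ → Δ`. -/
def FreshSeq (c : ℕ) (Γ Δ : Multiset Fm) : Prop :=
  (∀ F ∈ Γ, ¬ F.constIn c) ∧ ∀ F ∈ Δ, ¬ F.constIn c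

/-- The sequent `Γ → Δ` is an axiom: ⊤ ∈ Δ, or some `A` that is ⊥ or atomic
belongs to both `Γ` and `Δ`. -/
def AxSeq (Γ Δ : Multiset Fm) : Prop :=
  Fm.top ∈ Δ ∨ ∃ A : Fm, (A = Fm.bot ∨ A.isAtom) ∧ A ∈ Γ ∧ A ∈ Δ

/-- C-proofs: arbitrary derivations in the sequent calculus of the paper.
Sequents are pairs of multisets of formulas. -/
inductive CProof : Multiset Fm → Multiset Fm → Type
  | ax {Γ Δ : Multiset Fm} (h : AxSeq Γ Δ) : CProof Γ Δ
  | contrL {B : Fm} {Γ Δ : Multiset Fm} (p : CProof (B ::ₘ B ::ₘ Γ) Δ) : CProof (B ::ₘ Γ) Δ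
  | contrR {B : Fm} {Γ Δ : Multiset Fm} (p : CProof Γ (B ::ₘ B ::ₘ Δ)) : CProof Γ (B ::ₘ Δ)
  | botR {D : Fm} {Γ Δ : Multiset Fm} (p : CProof Γ (Fm.bot ::ₘ Δ)) : CProof Γ (D ::ₘ Δ)
  | andL {B D : Fm} {Γ Δ : Multiset Fm} (p : CProof (B ::ₘ D ::ₘ (B.conj D) ::ₘ Γ) Δ) :
      CProof ((B.conj D) ::ₘ Γ) Δ
  | andR {B D : Fm} {Γ Δ : Multiset Fm} (p : CProof Γ (B ::ₘ Δ)) (q : CProof Γ (D ::ₘ Δ)) :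
      CProof Γ ((B.conj D) ::ₘ Δ)
  | orL {B D : Fm} {Γ Δ : Multiset Fm} (p : CProof (B ::ₘ Γ) Δ) (q : CProof (D ::ₘ Γ) Δ) :
      CProof ((B.disj D) ::ₘ Γ) Δ
  | orR1 {B D : Fm} {Γ Δ : Multiset Fm} (p : CProof Γ (B ::ₘ Δ)) : CProof Γ ((B.disj D) ::ₘ Δ)
  | orR2 {B D : Fm} {Γ Δ : Multiset Fm} (p : CProof Γ (D ::ₘ Δ)) : CProof Γ ((B.disj D) ::ₘ Δ)
  | impL {B D : Fm} {Γ Δ Θ : Multiset Fm} (p : CProof ((B.imp D) ::ₘ Γ) (B ::ₘ Δ))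
      (q : CProof (D ::ₘ Γ) Θ) : CProof ((B.imp D) ::ₘ Γ) (Δ + Θ)
  | impR {B D : Fm} {Γ Δ : Multiset Fm} (p : CProof (B ::ₘ Γ) (D ::ₘ Δ)) :
      CProof Γ ((B.imp D) ::ₘ Δ)
  | allL {B : Fm} {Γ Δ : Multiset Fm} (t : Tm)
      (p : CProof ((B.inst t) ::ₘ (Fm.all B) ::ₘ Γ) Δ) : CProof ((Fm.all B) ::ₘ Γ) Δ
  | exR {B : Fm} {Γ Δ : Multiset Fm} (t : Tm) (p : CProof Γ ((B.inst t) ::ₘ Δ)) :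
      CProof Γ ((Fm.ex B) ::ₘ Δ)
  | exL {B : Fm} {Γ Δ : Multiset Fm} (c : ℕ) (hc : FreshSeq c ((Fm.ex B) ::ₘ Γ) Δ)
      (p : CProof ((B.inst (Tm.const c)) ::ₘ Γ) Δ) : CProof ((Fm.ex B) ::ₘ Γ) Δ
  | allR {B : Fm} {Γ Δ : Multiset Fm} (c : ℕ) (hc : FreshSeq c Γ ((Fm.all B) ::ₘ Δ))
      (p : CProof Γ ((B.inst (Tm.const c)) ::ₘ Δ)) : CProof Γ ((Fm.all B) ::ₘ Δ)

namespace CProof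

/-- An I-proof is a C-proof in which every sequent has exactly one formula in
its succedent. -/
def isI : ∀ (Γ Δ : Multiset Fm), CProof Γ Δ → Prop
  | _, _, @ax _ Δ _ => Multiset.card Δ = 1
  | _, _, @contrL _ _ Δ p => Multiset.card Δ = 1 ∧ isI _ _ p
  | _, _, @contrR B _ Δ p => Multiset.card (B ::ₘ Δ) = 1 ∧ isI _ _ p
  | _, _, @botR D _ Δ p => Multiset.card (D ::ₘ Δ) = 1 ∧ isI _ _ p
  | _, _, @andL _ _ _ Δ p => Multiset.card Δ = 1 ∧ isI _ _ p
  | _, _, @andR B D _ Δ p q => Multiset.card ((B.conj D) ::ₘ Δ) = 1 ∧ isI _ _ p ∧ isI _ _ q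
  | _, _, @orL _ _ _ Δ p q => Multiset.card Δ = 1 ∧ isI _ _ p ∧ isI _ _ q
  | _, _, @orR1 B D _ Δ p => Multiset.card ((B.disj D) ::ₘ Δ) = 1 ∧ isI _ _ p
  | _, _, @orR2 B D _ Δ p => Multiset.card ((B.disj D) ::ₘ Δ) = 1 ∧ isI _ _ p
  | _, _, @impL _ _ _ Δ Θ p q => Multiset.card (Δ + Θ) = 1 ∧ isI _ _ p ∧ isI _ _ q
  | _, _, @impR B D _ Δ p => Multiset.card ((B.imp D) ::ₘ Δ) = 1 ∧ isI _ _ p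
  | _, _, @allL _ _ Δ _ p => Multiset.card Δ = 1 ∧ isI _ _ p
  | _, _, @exR B _ Δ _ p => Multiset.card ((Fm.ex B) ::ₘ Δ) = 1 ∧ isI _ _ p
  | _, _, @exL _ _ Δ _ _ p => Multiset.card Δ = 1 ∧ isI _ _ p
  | _, _, @allR B _ Δ _ _ p => Multiset.card ((Fm.all B) ::ₘ Δ) = 1 ∧ isI _ _ p

end CProof

/-- Classical provability: `Γ ⊢_C F`. -/
def CProv (Γ : Multiset Fm) (F : Fm) : Prop := Nonempty (CProof Γ ({F} : Multiset Fm))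

/-- Intuitionistic provability: `Γ ⊢_I F`. -/
def IProv (Γ : Multiset Fm) (F : Fm) : Prop := ∃ p : CProof Γ ({F} : Multiset Fm), p.isI

namespace CProof

open Classical in
/-- The nonconstructiveness measure of a C-proof: the number of
nonconstructive occurrences of ∨-L and ⊃-R rules in it. -/
noncomputable def mu : ∀ (Γ Δ : Multiset Fm), CProof Γ Δ → ℕ
  | _, _, ax _ => 0
  | _, _, contrL p => mu _ _ p
  | _, _, contrR p => mu _ _ p
  | _, _, botR p => mu _ _ p
  | _, _, andL p => mu _ _ p
  | _, _, andR p q => mu _ _ p + mu _ _ q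
  | _, _, @orL B D Γ Δ p q =>
      mu _ _ p + mu _ _ q +
        (if ∃ F ∈ Δ, IProv (B ::ₘ Γ) F ∧ IProv (D ::ₘ Γ) F then 0 else 1)
  | _, _, orR1 p => mu _ _ p
  | _, _, orR2 p => mu _ _ p
  | _, _, impL p q => mu _ _ p + mu _ _ q
  | _, _, @impR B D Γ _ p => mu _ _ p + (if IProv (B ::ₘ Γ) D then 0 else 1)
  | _, _, allL _ p => mu _ _ p
  | _, _, exR _ p => mu _ _ p
  | _, _, exL _ _ p => mu _ _ p
  | _, _, allR _ _ p => mu _ _ p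

/-- The sequent `S → P` appears in the given C-proof. -/
def occursSeq : ∀ (Γ Δ : Multiset Fm), CProof Γ Δ → Multiset Fm → Multiset Fm → Prop
  | _, _, @ax Γ Δ _, S, P => Γ = S ∧ Δ = P
  | _, _, @contrL B Γ Δ p, S, P => ((B ::ₘ Γ) = S ∧ Δ = P) ∨ occursSeq _ _ p S P
  | _, _, @contrR B Γ Δ p, S, P => (Γ = S ∧ (B ::ₘ Δ) = P) ∨ occursSeq _ _ p S P
  | _, _, @botR D Γ Δ p, S, P => (Γ = S ∧ (D ::ₘ Δ) = P) ∨ occursSeq _ _ p S P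
  | _, _, @andL B D Γ Δ p, S, P => (((B.conj D) ::ₘ Γ) = S ∧ Δ = P) ∨ occursSeq _ _ p S P
  | _, _, @andR B D Γ Δ p q, S, P =>
      (Γ = S ∧ ((B.conj D) ::ₘ Δ) = P) ∨ occursSeq _ _ p S P ∨ occursSeq _ _ q S P
  | _, _, @orL B D Γ Δ p q, S, P =>
      (((B.disj D) ::ₘ Γ) = S ∧ Δ = P) ∨ occursSeq _ _ p S P ∨ occursSeq _ _ q S P
  | _, _, @orR1 B D Γ Δ p, S, P => (Γ = S ∧ ((B.disj D) ::ₘ Δ) = P) ∨ occursSeq _ _ p S P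
  | _, _, @orR2 B D Γ Δ p, S, P => (Γ = S ∧ ((B.disj D) ::ₘ Δ) = P) ∨ occursSeq _ _ p S P
  | _, _, @impL B D Γ Δ Θ p q, S, P =>
      (((B.imp D) ::ₘ Γ) = S ∧ (Δ + Θ) = P) ∨ occursSeq _ _ p S P ∨ occursSeq _ _ q S P
  | _, _, @impR B D Γ Δ p, S, P => (Γ = S ∧ ((B.imp D) ::ₘ Δ) = P) ∨ occursSeq _ _ p S P
  | _, _, @allL B Γ Δ _ p, S, P => (((Fm.all B) ::ₘ Γ) = S ∧ Δ = P) ∨ occursSeq _ _ p S P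
  | _, _, @exR B Γ Δ _ p, S, P => (Γ = S ∧ ((Fm.ex B) ::ₘ Δ) = P) ∨ occursSeq _ _ p S P
  | _, _, @exL B Γ Δ _ _ p, S, P => (((Fm.ex B) ::ₘ Γ) = S ∧ Δ = P) ∨ occursSeq _ _ p S P
  | _, _, @allR B Γ Δ _ _ p, S, P => (Γ = S ∧ ((Fm.all B) ::ₘ Δ) = P) ∨ occursSeq _ _ p S P

/-- `hasImpR p B S P D` holds when an ⊃-R rule with upper sequent
`B,S → P,D` and lower sequent `S → P,B⊃D` occurs in the proof `p`. -/
def hasImpR : ∀ (Γ Δ : Multiset Fm), CProof Γ Δ → Fm → Multiset Fm → Multiset Fm → Fm → Prop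
  | _, _, ax _, _, _, _, _ => False
  | _, _, contrL p, B, S, P, D => hasImpR _ _ p B S P D
  | _, _, contrR p, B, S, P, D => hasImpR _ _ p B S P D
  | _, _, botR p, B, S, P, D => hasImpR _ _ p B S P D
  | _, _, andL p, B, S, P, D => hasImpR _ _ p B S P D
  | _, _, andR p q, B, S, P, D => hasImpR _ _ p B S P D ∨ hasImpR _ _ q B S P D
  | _, _, orL p q, B, S, P, D => hasImpR _ _ p B S P D ∨ hasImpR _ _ q B S P D
  | _, _, orR1 p, B, S, P, D => hasImpR _ _ p B S P D
  | _, _, orR2 p, B, S, P, D => hasImpR _ _ p B S P D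
  | _, _, impL p q, B, S, P, D => hasImpR _ _ p B S P D ∨ hasImpR _ _ q B S P D
  | _, _, @impR B' D' Γ' Δ' p, B, S, P, D =>
      (B' = B ∧ Γ' = S ∧ Δ' = P ∧ D' = D) ∨ hasImpR _ _ p B S P D
  | _, _, allL _ p, B, S, P, D => hasImpR _ _ p B S P D
  | _, _, exR _ p, B, S, P, D => hasImpR _ _ p B S P D
  | _, _, exL _ _ p, B, S, P, D => hasImpR _ _ p B S P D
  | _, _, allR _ _ p, B, S, P, D => hasImpR _ _ p B S P D

/-- `hasOrL p B D S P` holds when an ∨-L rule with upper sequents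
`B,S → P` and `D,S → P` and lower sequent `B∨D,S → P` occurs in `p`. -/
def hasOrL : ∀ (Γ Δ : Multiset Fm), CProof Γ Δ → Fm → Fm → Multiset Fm → Multiset Fm → Prop
  | _, _, ax _, _, _, _, _ => False
  | _, _, contrL p, B, D, S, P => hasOrL _ _ p B D S P
  | _, _, contrR p, B, D, S, P => hasOrL _ _ p B D S P
  | _, _, botR p, B, D, S, P => hasOrL _ _ p B D S P
  | _, _, andL p, B, D, S, P => hasOrL _ _ p B D S P
  | _, _, andR p q, B, D, S, P => hasOrL _ _ p B D S P ∨ hasOrL _ _ q B D S P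
  | _, _, @orL B' D' Γ' Δ' p q, B, D, S, P =>
      (B' = B ∧ D' = D ∧ Γ' = S ∧ Δ' = P) ∨ hasOrL _ _ p B D S P ∨ hasOrL _ _ q B D S P
  | _, _, orR1 p, B, D, S, P => hasOrL _ _ p B D S P
  | _, _, orR2 p, B, D, S, P => hasOrL _ _ p B D S P
  | _, _, impL p q, B, D, S, P => hasOrL _ _ p B D S P ∨ hasOrL _ _ q B D S P
  | _, _, impR p, B, D, S, P => hasOrL _ _ p B D S P
  | _, _, allL _ p, B, D, S, P => hasOrL _ _ p B D S P
  | _, _, exR _ p, B, D, S, P => hasOrL _ _ p B D S P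
  | _, _, exL _ _ p, B, D, S, P => hasOrL _ _ p B D S P
  | _, _, allR _ _ p, B, D, S, P => hasOrL _ _ p B D S P

/-- Every formula in `Δ` is atomic or ⊥. -/
def neutralM (Δ : Multiset Fm) : Prop := ∀ F ∈ Δ, F.neutral

/-- A uniform proof: an I-proof in which any sequent whose succedent contains
a non-atomic formula occurs only as the lower sequent of an inference rule
that introduces the top-level logical symbol of that formula. -/
def isUniform : ∀ (Γ Δ : Multiset Fm), CProof Γ Δ → Prop
  | _, _, @ax _ Δ _ => Multiset.card Δ = 1
  | _, _, @contrL _ _ Δ p => Multiset.card Δ = 1 ∧ neutralM Δ ∧ isUniform _ _ p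
  | _, _, @contrR B _ Δ p =>
      Multiset.card (B ::ₘ Δ) = 1 ∧ neutralM (B ::ₘ Δ) ∧ isUniform _ _ p
  | _, _, @botR D _ Δ p =>
      Multiset.card (D ::ₘ Δ) = 1 ∧ neutralM (D ::ₘ Δ) ∧ isUniform _ _ p
  | _, _, @andL _ _ _ Δ p => Multiset.card Δ = 1 ∧ neutralM Δ ∧ isUniform _ _ p
  | _, _, @andR B D _ Δ p q =>
      Multiset.card ((B.conj D) ::ₘ Δ) = 1 ∧ isUniform _ _ p ∧ isUniform _ _ q
  | _, _, @orL _ _ _ Δ p q =>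
      Multiset.card Δ = 1 ∧ neutralM Δ ∧ isUniform _ _ p ∧ isUniform _ _ q
  | _, _, @orR1 B D _ Δ p => Multiset.card ((B.disj D) ::ₘ Δ) = 1 ∧ isUniform _ _ p
  | _, _, @orR2 B D _ Δ p => Multiset.card ((B.disj D) ::ₘ Δ) = 1 ∧ isUniform _ _ p
  | _, _, @impL _ _ _ Δ Θ p q =>
      Multiset.card (Δ + Θ) = 1 ∧ neutralM (Δ + Θ) ∧ isUniform _ _ p ∧ isUniform _ _ q
  | _, _, @impR B D _ Δ p => Multiset.card ((B.imp D) ::ₘ Δ) = 1 ∧ isUniform _ _ p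
  | _, _, @allL _ _ Δ _ p => Multiset.card Δ = 1 ∧ neutralM Δ ∧ isUniform _ _ p
  | _, _, @exR B _ Δ _ p => Multiset.card ((Fm.ex B) ::ₘ Δ) = 1 ∧ isUniform _ _ p
  | _, _, @exL _ _ Δ _ _ p => Multiset.card Δ = 1 ∧ neutralM Δ ∧ isUniform _ _ p
  | _, _, @allR B _ Δ _ _ p => Multiset.card ((Fm.all B) ::ₘ Δ) = 1 ∧ isUniform _ _ p

end CProof

/-- Uniform provability: `Γ ⊢_O F`. -/
def UProv (Γ : Multiset Fm) (F : Fm) : Prop :=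
  ∃ p : CProof Γ ({F} : Multiset Fm), p.isUniform

/-- The ordering ⪰ measuring the strength of formulas as assumptions. -/
inductive Fm.ge : Fm → Fm → Prop
  | refl (F : Fm) : Fm.ge F F
  | imp {F A B : Fm} : Fm.ge F B → Fm.ge F (Fm.imp A B)
  | disjl {F A B : Fm} : Fm.ge F A → Fm.ge F (Fm.disj A B)
  | disjr {F A B : Fm} : Fm.ge F B → Fm.ge F (Fm.disj A B)
  | ex {F P : Fm} (c : ℕ) : Fm.ge F (P.inst (Tm.const c)) → Fm.ge F (Fm.ex P)

/-- `MsGe Γ₁ Γ₂`: there is an injective map κ from `Γ₂` into `Γ₁` with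
`κ(F) ⪰ F` for every `F ∈ Γ₂`. -/
def MsGe (Γ₁ Γ₂ : Multiset Fm) : Prop :=
  ∃ Γ' ≤ Γ₁, Multiset.Rel Fm.ge Γ' Γ₂

mutual
  /-- G-formulas: G ::= ⊤ | ⊥ | A | G∧G | G∨G | D⊃G | ∃x G. -/
  inductive GFm : Fm → Prop
    | top : GFm Fm.top
    | bot : GFm Fm.bot
    | atom {p : ℕ} {ts : List Tm} : GFm (Fm.atom p ts)
    | conj {a b : Fm} : GFm a → GFm b → GFm (Fm.conj a b)
    | disj {a b : Fm} : GFm a → GFm b → GFm (Fm.disj a b)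
    | imp {a b : Fm} : DFm a → GFm b → GFm (Fm.imp a b)
    | ex {a : Fm} : GFm a → GFm (Fm.ex a)

  /-- D-formulas: D ::= ⊤ | ⊥ | A | G⊃D | D∧D | D∨D | ∃x D | ∀x D. -/
  inductive DFm : Fm → Prop
    | top : DFm Fm.top
    | bot : DFm Fm.bot
    | atom {p : ℕ} {ts : List Tm} : DFm (Fm.atom p ts)
    | imp {a b : Fm} : GFm a → DFm b → DFm (Fm.imp a b)
    | conj {a b : Fm} : DFm a → DFm b → DFm (Fm.conj a b)
    | disj {a b : Fm} : DFm a → DFm b → DFm (Fm.disj a b)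
    | ex {a : Fm} : DFm a → DFm (Fm.ex a)
    | all {a : Fm} : DFm a → DFm (Fm.all a)
end
/-- I_G-proofs: derivations in the intuitionistic sequent calculus (single
succedent formula) augmented with the derived rules ∨-L_G and res_G, in which
the eigenvariable proviso on ∃-L and ∀-R also disallows constants in `G`. -/
inductive IGProof (G : Fm) : Multiset Fm → Fm → Type
  | ax {Γ : Multiset Fm} {F : Fm} (h : AxSeq Γ ({F} : Multiset Fm)) : IGProof G Γ F
  | contrL {B : Fm} {Γ : Multiset Fm} {F : Fm} (p : IGProof G (B ::ₘ B ::ₘ Γ) F) :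
      IGProof G (B ::ₘ Γ) F
  | botR {Γ : Multiset Fm} {F : Fm} (p : IGProof G Γ Fm.bot) : IGProof G Γ F
  | andL {B D : Fm} {Γ : Multiset Fm} {F : Fm}
      (p : IGProof G (B ::ₘ D ::ₘ (B.conj D) ::ₘ Γ) F) : IGProof G ((B.conj D) ::ₘ Γ) F
  | andR {B D : Fm} {Γ : Multiset Fm} (p : IGProof G Γ B) (q : IGProof G Γ D) :
      IGProof G Γ (B.conj D)
  | orL {B D : Fm} {Γ : Multiset Fm} {F : Fm} (p : IGProof G (B ::ₘ Γ) F)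
      (q : IGProof G (D ::ₘ Γ) F) : IGProof G ((B.disj D) ::ₘ Γ) F
  | orR1 {B D : Fm} {Γ : Multiset Fm} (p : IGProof G Γ B) : IGProof G Γ (B.disj D)
  | orR2 {B D : Fm} {Γ : Multiset Fm} (p : IGProof G Γ D) : IGProof G Γ (B.disj D)
  | impL {B D : Fm} {Γ : Multiset Fm} {F : Fm} (p : IGProof G ((B.imp D) ::ₘ Γ) B)
      (q : IGProof G (D ::ₘ Γ) F) : IGProof G ((B.imp D) ::ₘ Γ) F
  | impR {B D : Fm} {Γ : Multiset Fm} (p : IGProof G (B ::ₘ Γ) D) : IGProof G Γ (B.imp D)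
  | allL {B : Fm} {Γ : Multiset Fm} {F : Fm} (t : Tm)
      (p : IGProof G ((B.inst t) ::ₘ (Fm.all B) ::ₘ Γ) F) : IGProof G ((Fm.all B) ::ₘ Γ) F
  | exR {B : Fm} {Γ : Multiset Fm} (t : Tm) (p : IGProof G Γ (B.inst t)) :
      IGProof G Γ (Fm.ex B)
  | exL {B : Fm} {Γ : Multiset Fm} {F : Fm} (c : ℕ)
      (hc : FreshSeq c ((Fm.ex B) ::ₘ Γ) ({F} : Multiset Fm)) (hG : ¬ G.constIn c)
      (p : IGProof G ((B.inst (Tm.const c)) ::ₘ Γ) F) : IGProof G ((Fm.ex B) ::ₘ Γ) F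
  | allR {B : Fm} {Γ : Multiset Fm} (c : ℕ)
      (hc : FreshSeq c Γ ({Fm.all B} : Multiset Fm)) (hG : ¬ G.constIn c)
      (p : IGProof G Γ (B.inst (Tm.const c))) : IGProof G Γ (Fm.all B)
  | orLG {B D : Fm} {Γ : Multiset Fm} {F : Fm} (p : IGProof G (B ::ₘ Γ) F)
      (q : IGProof G (D ::ₘ Γ) G) : IGProof G ((B.disj D) ::ₘ Γ) F
  | resG {Γ : Multiset Fm} {F : Fm} (p : IGProof G Γ G) : IGProof G Γ F

namespace IGProof

/-- The number of occurrences of the ∨-L rule in an I_G-proof. -/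
def orLCount : ∀ (G : Fm) (Γ : Multiset Fm) (F : Fm), IGProof G Γ F → ℕ
  | _, _, _, ax _ => 0
  | _, _, _, contrL p => orLCount _ _ _ p
  | _, _, _, botR p => orLCount _ _ _ p
  | _, _, _, andL p => orLCount _ _ _ p
  | _, _, _, andR p q => orLCount _ _ _ p + orLCount _ _ _ q
  | _, _, _, orL p q => orLCount _ _ _ p + orLCount _ _ _ q + 1
  | _, _, _, orR1 p => orLCount _ _ _ p
  | _, _, _, orR2 p => orLCount _ _ _ p
  | _, _, _, impL p q => orLCount _ _ _ p + orLCount _ _ _ q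
  | _, _, _, impR p => orLCount _ _ _ p
  | _, _, _, allL _ p => orLCount _ _ _ p
  | _, _, _, exR _ p => orLCount _ _ _ p
  | _, _, _, exL _ _ _ p => orLCount _ _ _ p
  | _, _, _, allR _ _ _ p => orLCount _ _ _ p
  | _, _, _, orLG p q => orLCount _ _ _ p + orLCount _ _ _ q
  | _, _, _, resG p => orLCount _ _ _ p

/-- The height of an I_G-proof: the length of its longest branch. -/
def height : ∀ (G : Fm) (Γ : Multiset Fm) (F : Fm), IGProof G Γ F → ℕ
  | _, _, _, ax _ => 1
  | _, _, _, contrL p => height _ _ _ p + 1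
  | _, _, _, botR p => height _ _ _ p + 1
  | _, _, _, andL p => height _ _ _ p + 1
  | _, _, _, andR p q => max (height _ _ _ p) (height _ _ _ q) + 1
  | _, _, _, orL p q => max (height _ _ _ p) (height _ _ _ q) + 1
  | _, _, _, orR1 p => height _ _ _ p + 1
  | _, _, _, orR2 p => height _ _ _ p + 1
  | _, _, _, impL p q => max (height _ _ _ p) (height _ _ _ q) + 1
  | _, _, _, impR p => height _ _ _ p + 1
  | _, _, _, allL _ p => height _ _ _ p + 1
  | _, _, _, exR _ p => height _ _ _ p + 1
  | _, _, _, exL _ _ _ p => height _ _ _ p + 1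
  | _, _, _, allR _ _ _ p => height _ _ _ p + 1
  | _, _, _, orLG p q => max (height _ _ _ p) (height _ _ _ q) + 1
  | _, _, _, resG p => height _ _ _ p + 1

/-- The number of sequents appearing in an I_G-proof. -/
def size : ∀ (G : Fm) (Γ : Multiset Fm) (F : Fm), IGProof G Γ F → ℕ
  | _, _, _, ax _ => 1
  | _, _, _, contrL p => size _ _ _ p + 1
  | _, _, _, botR p => size _ _ _ p + 1
  | _, _, _, andL p => size _ _ _ p + 1
  | _, _, _, andR p q => size _ _ _ p + size _ _ _ q + 1
  | _, _, _, orL p q => size _ _ _ p + size _ _ _ q + 1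
  | _, _, _, orR1 p => size _ _ _ p + 1
  | _, _, _, orR2 p => size _ _ _ p + 1
  | _, _, _, impL p q => size _ _ _ p + size _ _ _ q + 1
  | _, _, _, impR p => size _ _ _ p + 1
  | _, _, _, allL _ p => size _ _ _ p + 1
  | _, _, _, exR _ p => size _ _ _ p + 1
  | _, _, _, exL _ _ _ p => size _ _ _ p + 1
  | _, _, _, allR _ _ _ p => size _ _ _ p + 1
  | _, _, _, orLG p q => size _ _ _ p + size _ _ _ q + 1
  | _, _, _, resG p => size _ _ _ p + 1

/-- O_G-proofs: I_G-proofs containing no occurrence of the ∨-L rule, in which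
any sequent whose succedent contains a non-atomic formula occurs only as the
lower sequent of a rule introducing the top-level symbol of that formula. -/
def isOG : ∀ (G : Fm) (Γ : Multiset Fm) (F : Fm), IGProof G Γ F → Prop
  | _, _, _, ax _ => True
  | _, _, _, @contrL _ _ _ F p => F.neutral ∧ isOG _ _ _ p
  | _, _, _, @botR _ _ F p => F.neutral ∧ isOG _ _ _ p
  | _, _, _, @andL _ _ _ _ F p => F.neutral ∧ isOG _ _ _ p
  | _, _, _, andR p q => isOG _ _ _ p ∧ isOG _ _ _ q
  | _, _, _, orL _ _ => False
  | _, _, _, orR1 p => isOG _ _ _ p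
  | _, _, _, orR2 p => isOG _ _ _ p
  | _, _, _, @impL _ _ _ _ F p q => F.neutral ∧ isOG _ _ _ p ∧ isOG _ _ _ q
  | _, _, _, impR p => isOG _ _ _ p
  | _, _, _, @allL _ _ _ F _ p => F.neutral ∧ isOG _ _ _ p
  | _, _, _, exR _ p => isOG _ _ _ p
  | _, _, _, @exL _ _ _ F _ _ _ p => F.neutral ∧ isOG _ _ _ p
  | _, _, _, allR _ _ _ p => isOG _ _ _ p
  | _, _, _, @orLG _ _ _ _ F p q => F.neutral ∧ isOG _ _ _ p ∧ isOG _ _ _ q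
  | _, _, _, @resG _ _ F p => F.neutral ∧ isOG _ _ _ p

/-- `hasOrL p B D S F` holds when an ∨-L rule with upper sequents `B,S → F`
and `D,S → F` and lower sequent `B∨D,S → F` occurs in the I_G-proof `p`. -/
def hasOrL : ∀ (G : Fm) (Γ : Multiset Fm) (W : Fm), IGProof G Γ W →
    Fm → Fm → Multiset Fm → Fm → Prop
  | _, _, _, ax _, _, _, _, _ => False
  | _, _, _, contrL p, B, D, S, F => hasOrL _ _ _ p B D S F
  | _, _, _, botR p, B, D, S, F => hasOrL _ _ _ p B D S F
  | _, _, _, andL p, B, D, S, F => hasOrL _ _ _ p B D S F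
  | _, _, _, andR p q, B, D, S, F => hasOrL _ _ _ p B D S F ∨ hasOrL _ _ _ q B D S F
  | _, _, _, @orL _ B' D' Γ' F' p q, B, D, S, F =>
      (B' = B ∧ D' = D ∧ Γ' = S ∧ F' = F) ∨ hasOrL _ _ _ p B D S F ∨ hasOrL _ _ _ q B D S F
  | _, _, _, orR1 p, B, D, S, F => hasOrL _ _ _ p B D S F
  | _, _, _, orR2 p, B, D, S, F => hasOrL _ _ _ p B D S F
  | _, _, _, impL p q, B, D, S, F => hasOrL _ _ _ p B D S F ∨ hasOrL _ _ _ q B D S F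
  | _, _, _, impR p, B, D, S, F => hasOrL _ _ _ p B D S F
  | _, _, _, allL _ p, B, D, S, F => hasOrL _ _ _ p B D S F
  | _, _, _, exR _ p, B, D, S, F => hasOrL _ _ _ p B D S F
  | _, _, _, exL _ _ _ p, B, D, S, F => hasOrL _ _ _ p B D S F
  | _, _, _, allR _ _ _ p, B, D, S, F => hasOrL _ _ _ p B D S F
  | _, _, _, orLG p q, B, D, S, F => hasOrL _ _ _ p B D S F ∨ hasOrL _ _ _ q B D S F
  | _, _, _, resG p, B, D, S, F => hasOrL _ _ _ p B D S F

end IGProof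

/-- In the simplified syntax, `A` ranges over atomic formulas together with
⊤ and ⊥. -/
def AtFm (F : Fm) : Prop := F.isAtom ∨ F = Fm.top ∨ F = Fm.bot

/-- `disjs A [B₁,…,Bₙ]` is the disjunction `A ∨ B₁ ∨ … ∨ Bₙ`. -/
def disjs (A : Fm) : List Fm → Fm
  | [] => A
  | B :: l => Fm.disj A (disjs B l)

mutual
  /-- Goals in the simplified syntax: G ::= A | G∧G | G∨G | D⊃G | ∃x G. -/
  inductive Goal : Fm → Prop
    | atm {A : Fm} : AtFm A → Goal A
    | conj {a b : Fm} : Goal a → Goal b → Goal (Fm.conj a b)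
    | disj {a b : Fm} : Goal a → Goal b → Goal (Fm.disj a b)
    | imp {a b : Fm} : PCl a → Goal b → Goal (Fm.imp a b)
    | ex {a : Fm} : Goal a → Goal (Fm.ex a)

  /-- Program clauses in the simplified syntax:
  D ::= (A∨…∨A) | G⊃(A∨…∨A) | ∀x D. -/
  inductive PCl : Fm → Prop
    | head {A : Fm} {l : List Fm} : AtFm A → (∀ B ∈ l, AtFm B) → PCl (disjs A l)
    | impHead {g A : Fm} {l : List Fm} : Goal g → AtFm A → (∀ B ∈ l, AtFm B) →
        PCl (Fm.imp g (disjs A l))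
    | all {d : Fm} : PCl d → PCl (Fm.all d)
end

/-- The instances `[D]` of a program clause `D`, as pairs whose first
component is `∅` (`none`) or `{G}` (`some G`) and whose second component is
the collection of head atoms. -/
inductive ClInst : Fm → Option Fm → Multiset Fm → Prop
  | head {A : Fm} {l : List Fm} : AtFm A → (∀ B ∈ l, AtFm B) →
      ClInst (disjs A l) none (A ::ₘ (l : Multiset Fm))
  | impHead {g A : Fm} {l : List Fm} : Goal g → AtFm A → (∀ B ∈ l, AtFm B) →
      ClInst (Fm.imp g (disjs A l)) (some g) (A ::ₘ (l : Multiset Fm))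
  | all {d : Fm} {o : Option Fm} {m : Multiset Fm} (t : Tm) :
      ClInst (d.inst t) o m → ClInst (Fm.all d) o m

/-- `[Γ]`: the instances of the clauses in `Γ`. -/
def GammaInst (Γ : Multiset Fm) (o : Option Fm) (m : Multiset Fm) : Prop :=
  ∃ D ∈ Γ, ClInst D o m

/-- The reduced proof system relative to the goal `G`: axioms `Δ → ⊤`, the
rules RESTART, ATOMIC and BACKCHAIN relativized to `G`, and ∨-R, ∧-R, ⊃-R
and ∃-R. -/
inductive RP (G : Fm) : Multiset Fm → Fm → Prop
  | topAx {Γ : Multiset Fm} : RP G Γ Fm.top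
  | restart {Γ : Multiset Fm} {C : Fm} (hC : C.isAtom ∨ C = Fm.bot) (p : RP G Γ G) :
      RP G Γ C
  | atomic {Γ : Multiset Fm} {C : Fm} {m : Multiset Fm} (hC : C.isAtom ∨ C = Fm.bot)
      (h : GammaInst Γ none (C ::ₘ m) ∨ GammaInst Γ none (Fm.bot ::ₘ m))
      (ps : ∀ A ∈ m, RP G (A ::ₘ Γ) G) : RP G Γ C
  | backchain {Γ : Multiset Fm} {C G' : Fm} {m : Multiset Fm}
      (hC : C.isAtom ∨ C = Fm.bot)
      (h : GammaInst Γ (some G') (C ::ₘ m) ∨ GammaInst Γ (some G') (Fm.bot ::ₘ m))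
      (p : RP G Γ G') (ps : ∀ A ∈ m, RP G (A ::ₘ Γ) G) : RP G Γ C
  | orR1 {Γ : Multiset Fm} {B D : Fm} (p : RP G Γ B) : RP G Γ (B.disj D)
  | orR2 {Γ : Multiset Fm} {B D : Fm} (p : RP G Γ D) : RP G Γ (B.disj D)
  | andR {Γ : Multiset Fm} {B D : Fm} (p : RP G Γ B) (q : RP G Γ D) : RP G Γ (B.conj D)
  | impR {Γ : Multiset Fm} {B D : Fm} (p : RP G (B ::ₘ Γ) D) : RP G Γ (B.imp D)
  | exR {Γ : Multiset Fm} {B : Fm} (t : Tm) (p : RP G Γ (B.inst t)) : RP G Γ (Fm.ex B)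

/-!
An ∨-L-free I_G-derivation of `Γ → G` is transformed from the root downwards, in a context `Δ`
covering the current antecedent (every antecedent formula is `Fm.ge`-below one in `Δ`). Right
rules are copied. Any other rule is postponed: its succedent is first decomposed by right rules
down to neutral leaves. At such a leaf ⊥-R and res_G are re-applied to the transformed premise,
while a left rule is applied to `Δ` (unless `Δ` already holds a formula stronger than the one it
would add) and its premises are closed by res_G. The proof of `G` needed there is the RESTART:
grafting the weakened premise in place of the left rule yields a strictly smaller derivation of
a weakening of the root sequent, so induction on size applies.
-/

namespace Fm

def complexity : Fm → ℕ
  | top => 0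
  | bot => 0
  | atom _ _ => 0
  | conj a b => a.complexity + b.complexity + 1
  | disj a b => a.complexity + b.complexity + 1
  | imp a b => a.complexity + b.complexity + 1
  | ex a => a.complexity + 1
  | all a => a.complexity + 1

@[simp]
lemma complexity_subst (k : ℕ) (u : Tm) (a : Fm) : (a.subst k u).complexity = a.complexity := by
  induction a generalizing k <;> simp [subst, complexity, *]

@[simp]
lemma complexity_inst (u : Tm) (a : Fm) : (a.inst u).complexity = a.complexity :=
  complexity_subst 0 u a

end Fm

lemma gFm_subst_and_dFm_subst (F : Fm) (k : ℕ) (u : Tm) :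
    (GFm F → GFm (F.subst k u)) ∧ (DFm F → DFm (F.subst k u)) := by
  induction F generalizing k <;> refine ⟨fun h => ?_, fun h => ?_⟩ <;> cases h <;>
    simp only [Fm.subst] <;> constructor <;> simp_all

lemma GFm.inst {F : Fm} (h : GFm F) (u : Tm) : GFm (F.inst u) :=
  (gFm_subst_and_dFm_subst F 0 u).1 h

lemma DFm.inst {F : Fm} (h : DFm F) (u : Tm) : DFm (F.inst u) :=
  (gFm_subst_and_dFm_subst F 0 u).2 h

namespace Tm

def rename (σ : ℕ → ℕ) : Tm → Tm
  | var n => var n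
  | const c => const (σ c)

lemma rename_subst (σ : ℕ → ℕ) (k : ℕ) (u t : Tm) :
    (subst k u t).rename σ = subst k (u.rename σ) (t.rename σ) := by
  cases t with
  | var n => by_cases h : n = k <;> simp [subst, rename, h]
  | const c => rfl

lemma rename_congr {σ τ : ℕ → ℕ} {t : Tm} (h : ∀ c, t.constIn c → σ c = τ c) :
    t.rename σ = t.rename τ := by
  cases t with
  | var n => rfl
  | const c => simp [rename, h c rfl]

@[simp]
lemma rename_id : rename id = id := by
  funext t; cases t <;> rfl

lemma finite_constIn (t : Tm) : {c | t.constIn c}.Finite := by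
  cases t with
  | var n => simp [constIn]
  | const d => exact (Set.finite_singleton d).subset fun c h => h.symm

end Tm

namespace Fm

def rename (σ : ℕ → ℕ) : Fm → Fm
  | top => top
  | bot => bot
  | atom p ts => atom p (ts.map (Tm.rename σ))
  | conj a b => conj (a.rename σ) (b.rename σ)
  | disj a b => disj (a.rename σ) (b.rename σ)
  | imp a b => imp (a.rename σ) (b.rename σ)
  | ex a => ex (a.rename σ)
  | all a => all (a.rename σ)

lemma rename_subst (σ : ℕ → ℕ) (k : ℕ) (u : Tm) (a : Fm) :
    (a.subst k u).rename σ = (a.rename σ).subst k (u.rename σ) := by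
  induction a generalizing k <;> simp [subst, rename, Tm.rename_subst, *]

lemma rename_inst (σ : ℕ → ℕ) (u : Tm) (a : Fm) :
    (a.inst u).rename σ = (a.rename σ).inst (u.rename σ) :=
  rename_subst σ 0 u a

lemma rename_congr {σ τ : ℕ → ℕ} {a : Fm} (h : ∀ c, a.constIn c → σ c = τ c) :
    a.rename σ = a.rename τ := by
  induction a with
  | atom p ts =>
      simp only [rename, atom.injEq, true_and]
      exact List.map_congr_left fun t ht => Tm.rename_congr fun c hc => h c ⟨t, ht, hc⟩
  | _ => simp_all [rename, constIn]

@[simp]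
lemma rename_id : rename id = id := by
  funext a; induction a <;> simp_all [rename]

lemma rename_update {σ : ℕ → ℕ} {c e : ℕ} {a : Fm} (h : ¬ a.constIn c) :
    a.rename (Function.update σ c e) = a.rename σ :=
  rename_congr fun d hd => Function.update_of_ne (by rintro rfl; exact h hd) e σ

lemma rename_update_inst {σ : ℕ → ℕ} {c e : ℕ} {a : Fm} (h : ¬ a.constIn c) :
    (a.inst (.const c)).rename (Function.update σ c e) = (a.rename σ).inst (.const e) := by
  simp [rename_inst, rename_update h, Tm.rename]

lemma isAtom_rename {σ : ℕ → ℕ} {a : Fm} (h : a.isAtom) : (a.rename σ).isAtom := by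
  cases a <;> simp_all [isAtom, rename]

lemma finite_constIn (a : Fm) : {c | a.constIn c}.Finite := by
  induction a with
  | atom p ts =>
      refine (ts.finite_toSet.biUnion fun t _ => t.finite_constIn).subset ?_
      rintro c ⟨t, ht, hc⟩
      exact Set.mem_biUnion ht hc
  | conj a b ha hb | disj a b ha hb | imp a b ha hb => exact (ha.union hb).subset fun c h => h
  | ex a ha | all a ha => exact ha
  | _ => simp [constIn]

end Fm

lemma map_rename_update {σ : ℕ → ℕ} {c e : ℕ} {Γ : Multiset Fm}
    (h : ∀ X ∈ Γ, ¬ X.constIn c) :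
    Γ.map (Fm.rename (Function.update σ c e)) = Γ.map (Fm.rename σ) :=
  Multiset.map_congr rfl fun X hX => Fm.rename_update (h X hX)

lemma exists_fresh_const (S : Multiset Fm) : ∃ e, ∀ X ∈ S, ¬ X.constIn e := by
  obtain ⟨e, he⟩ := (S.finite_toSet.biUnion fun X _ => X.finite_constIn).exists_notMem
  exact ⟨e, fun X hX hXe => he (Set.mem_biUnion hX hXe)⟩

lemma AxSeq.rename_add {Γ : Multiset Fm} {F : Fm} (h : AxSeq Γ {F}) (σ : ℕ → ℕ)
    (W : Multiset Fm) : AxSeq (W + Γ.map (Fm.rename σ)) {F.rename σ} := by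
  rcases h with h | ⟨A, hA, hΓ, hF⟩
  · obtain rfl := Multiset.mem_singleton.1 h
    exact Or.inl (Multiset.mem_singleton_self _)
  · obtain rfl := Multiset.mem_singleton.1 hF
    refine Or.inr ⟨A.rename σ, ?_, Multiset.mem_add.2 (Or.inr (Multiset.mem_map_of_mem _ hΓ)),
      Multiset.mem_singleton_self _⟩
    rcases hA with rfl | hA
    · exact Or.inl rfl
    · exact Or.inr (Fm.isAtom_rename hA)

lemma Fm.ge.trans {X Y Z : Fm} (h₁ : X.ge Y) (h₂ : Y.ge Z) : X.ge Z := by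
  induction h₂ with
  | refl => exact h₁
  | imp _ ih => exact .imp ih
  | disjl _ ih => exact .disjl ih
  | disjr _ ih => exact .disjr ih
  | ex c _ ih => exact .ex c ih

lemma Fm.ge.eq_of_neutral {X A : Fm} (h : X.ge A) (hA : A.neutral) : X = A := by
  cases h <;> simp_all [Fm.neutral, Fm.isAtom]

def Covers (Δ Γ : Multiset Fm) : Prop := ∀ y ∈ Γ, ∃ x ∈ Δ, x.ge y

namespace Covers

variable {Δ Γ : Multiset Fm}

lemma refl (Γ : Multiset Fm) : Covers Γ Γ := fun y hy => ⟨y, hy, .refl y⟩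

lemma of_subset (h : Γ ⊆ Δ) : Covers Δ Γ := fun y hy => ⟨y, h hy, .refl y⟩

lemma trans {Δ₁ Δ₂ : Multiset Fm} (h₁ : Covers Δ₁ Δ₂) (h₂ : Covers Δ₂ Δ) :
    Covers Δ₁ Δ :=
  fun z hz =>
    let ⟨y, hy, hyz⟩ := h₂ z hz
    let ⟨x, hx, hxy⟩ := h₁ y hy
    ⟨x, hx, hxy.trans hyz⟩

lemma add {Γ₁ Γ₂ : Multiset Fm} (h₁ : Covers Δ Γ₁) (h₂ : Covers Δ Γ₂) :
    Covers Δ (Γ₁ + Γ₂) :=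
  fun y hy => (Multiset.mem_add.1 hy).elim (h₁ y) (h₂ y)

lemma cons {y : Fm} (hy : ∃ x ∈ Δ, x.ge y) (h : Covers Δ Γ) :
    Covers Δ (y ::ₘ Γ) := fun z hz =>
  (Multiset.mem_cons.1 hz).elim (fun hzy => hzy ▸ hy) (h z)

lemma cons_of_ge {A P : Fm} (h : A.ge P) : Covers (A ::ₘ Δ) (P ::ₘ Δ) :=
  cons ⟨A, Multiset.mem_cons_self _ _, h⟩ (of_subset (Multiset.subset_cons _ _))

end Covers

/-- `IGDerivable G Γ F n`: the sequent `Γ → F` has an I_G-proof without ∨-L consisting of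
`n` sequents. -/
inductive IGDerivable (G : Fm) : Multiset Fm → Fm → ℕ → Prop
  | ax {Γ : Multiset Fm} {F : Fm} (h : AxSeq Γ {F}) : IGDerivable G Γ F 1
  | contrL {B : Fm} {Γ : Multiset Fm} {F : Fm} {n : ℕ}
      (h : IGDerivable G (B ::ₘ B ::ₘ Γ) F n) :
      IGDerivable G (B ::ₘ Γ) F (n + 1)
  | botR {Γ : Multiset Fm} {F : Fm} {n : ℕ} (h : IGDerivable G Γ Fm.bot n) :
      IGDerivable G Γ F (n + 1)
  | andL {B D : Fm} {Γ : Multiset Fm} {F : Fm} {n : ℕ}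
      (h : IGDerivable G (B ::ₘ D ::ₘ B.conj D ::ₘ Γ) F n) :
      IGDerivable G (B.conj D ::ₘ Γ) F (n + 1)
  | andR {B D : Fm} {Γ : Multiset Fm} {m n : ℕ} (h₁ : IGDerivable G Γ B m)
      (h₂ : IGDerivable G Γ D n) : IGDerivable G Γ (B.conj D) (m + n + 1)
  | orR1 {B D : Fm} {Γ : Multiset Fm} {n : ℕ} (h : IGDerivable G Γ B n) :
      IGDerivable G Γ (B.disj D) (n + 1)
  | orR2 {B D : Fm} {Γ : Multiset Fm} {n : ℕ} (h : IGDerivable G Γ D n) :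
      IGDerivable G Γ (B.disj D) (n + 1)
  | impL {B D : Fm} {Γ : Multiset Fm} {F : Fm} {m n : ℕ}
      (h₁ : IGDerivable G (B.imp D ::ₘ Γ) B m) (h₂ : IGDerivable G (D ::ₘ Γ) F n) :
      IGDerivable G (B.imp D ::ₘ Γ) F (m + n + 1)
  | impR {B D : Fm} {Γ : Multiset Fm} {n : ℕ} (h : IGDerivable G (B ::ₘ Γ) D n) :
      IGDerivable G Γ (B.imp D) (n + 1)
  | allL {B : Fm} {Γ : Multiset Fm} {F : Fm} {n : ℕ} (t : Tm)
      (h : IGDerivable G (B.inst t ::ₘ Fm.all B ::ₘ Γ) F n) :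
      IGDerivable G (Fm.all B ::ₘ Γ) F (n + 1)
  | exR {B : Fm} {Γ : Multiset Fm} {n : ℕ} (t : Tm) (h : IGDerivable G Γ (B.inst t) n) :
      IGDerivable G Γ (Fm.ex B) (n + 1)
  | exL {B : Fm} {Γ : Multiset Fm} {F : Fm} {n : ℕ} (c : ℕ)
      (hc : FreshSeq c (Fm.ex B ::ₘ Γ) {F}) (hG : ¬ G.constIn c)
      (h : IGDerivable G (B.inst (.const c) ::ₘ Γ) F n) :
      IGDerivable G (Fm.ex B ::ₘ Γ) F (n + 1)
  | allR {B : Fm} {Γ : Multiset Fm} {n : ℕ} (c : ℕ) (hc : FreshSeq c Γ {Fm.all B})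
      (hG : ¬ G.constIn c) (h : IGDerivable G Γ (B.inst (.const c)) n) :
      IGDerivable G Γ (Fm.all B) (n + 1)
  | orLG {B D : Fm} {Γ : Multiset Fm} {F : Fm} {m n : ℕ} (h₁ : IGDerivable G (B ::ₘ Γ) F m)
      (h₂ : IGDerivable G (D ::ₘ Γ) G n) : IGDerivable G (B.disj D ::ₘ Γ) F (m + n + 1)
  | resG {Γ : Multiset Fm} {F : Fm} {n : ℕ} (h : IGDerivable G Γ G n) :
      IGDerivable G Γ F (n + 1)

lemma IGProof.igDerivable {G : Fm} {Γ : Multiset Fm} {F : Fm} (p : IGProof G Γ F)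
    (hp : p.orLCount = 0) : IGDerivable G Γ F p.size := by
  induction p <;> simp only [IGProof.orLCount, IGProof.size, Nat.add_eq_zero_iff] at hp ⊢
  case ax h => exact .ax h
  case contrL ih => exact .contrL (ih hp)
  case botR ih => exact .botR (ih hp)
  case andL ih => exact .andL (ih hp)
  case andR ih₁ ih₂ => exact .andR (ih₁ hp.1) (ih₂ hp.2)
  case orR1 ih => exact .orR1 (ih hp)
  case orR2 ih => exact .orR2 (ih hp)
  case impL ih₁ ih₂ => exact .impL (ih₁ hp.1) (ih₂ hp.2)
  case impR ih => exact .impR (ih hp)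
  case allL t _ ih => exact .allL t (ih hp)
  case exR t _ ih => exact .exR t (ih hp)
  case exL c hc hG _ ih => exact .exL c hc hG (ih hp)
  case allR c hc hG _ ih => exact .allR c hc hG (ih hp)
  case orLG ih₁ ih₂ => exact .orLG (ih₁ hp.1) (ih₂ hp.2)
  case resG ih => exact .resG (ih hp)
  case orL => omega

namespace IGDerivable

variable {G : Fm}

lemma pos {Γ : Multiset Fm} {F : Fm} {n : ℕ} (h : IGDerivable G Γ F n) : 0 < n := by
  cases h <;> omega

lemma rename_add {Γ : Multiset Fm} {F : Fm} {n : ℕ} (h : IGDerivable G Γ F n) (σ : ℕ → ℕ)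
    (hσ : G.rename σ = G) (W : Multiset Fm) :
    IGDerivable G (W + Γ.map (Fm.rename σ)) (F.rename σ) n := by
  induction h generalizing σ <;>
    try simp only [Multiset.map_cons, Multiset.add_cons, Fm.rename, Fm.rename_inst] at *
  case ax h => exact .ax (h.rename_add σ W)
  case contrL ih => exact .contrL (ih σ hσ)
  case botR ih => exact .botR (ih σ hσ)
  case andL ih => exact .andL (ih σ hσ)
  case andR ih₁ ih₂ => exact .andR (ih₁ σ hσ) (ih₂ σ hσ)
  case orR1 ih => exact .orR1 (ih σ hσ)
  case orR2 ih => exact .orR2 (ih σ hσ)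
  case impL ih₁ ih₂ => exact .impL (ih₁ σ hσ) (ih₂ σ hσ)
  case impR ih => exact .impR (ih σ hσ)
  case allL ih => exact .allL _ (ih σ hσ)
  case exR ih => exact .exR _ (ih σ hσ)
  case orLG ih₁ ih₂ => exact .orLG (ih₁ σ hσ) (by simpa only [hσ] using ih₂ σ hσ)
  case resG ih => exact .resG (by simpa only [hσ] using ih σ hσ)
  case exL B Γ F n c hc hGc _ ih =>
    have hcB : ¬ B.constIn c := hc.1 (Fm.ex B) (Multiset.mem_cons_self _ _)
    have hcΓ : ∀ X ∈ Γ, ¬ X.constIn c := fun X hX => hc.1 X (Multiset.mem_cons_of_mem hX)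
    obtain ⟨e, he⟩ := exists_fresh_const
      (G ::ₘ F.rename σ ::ₘ Fm.ex (B.rename σ) ::ₘ (W + Γ.map (Fm.rename σ)))
    have := ih (Function.update σ c e) (by rw [Fm.rename_update hGc, hσ])
    rw [Fm.rename_update hcB, map_rename_update hcΓ,
      Fm.rename_update (hc.2 F (Multiset.mem_singleton_self F))] at this
    refine .exL e ⟨fun X hX => he X ?_, fun X hX => he X ?_⟩ (he G (by simp))
      (by simpa [Tm.rename])
    · simp [hX]
    · simp [Multiset.mem_singleton.1 hX]
  case allR B Γ n c hc hGc _ ih =>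
    have hcB : ¬ B.constIn c := hc.2 (Fm.all B) (Multiset.mem_singleton_self _)
    obtain ⟨e, he⟩ :=
      exists_fresh_const (G ::ₘ Fm.all (B.rename σ) ::ₘ (W + Γ.map (Fm.rename σ)))
    have := ih (Function.update σ c e) (by rw [Fm.rename_update hGc, hσ])
    rw [Fm.rename_update hcB, map_rename_update hc.1] at this
    refine .allR e ⟨fun X hX => he X ?_, fun X hX => he X ?_⟩ (he G (by simp))
      (by simpa [Tm.rename])
    · simp [hX]
    · simp [Multiset.mem_singleton.1 hX]

lemma weaken {Γ : Multiset Fm} {F : Fm} {n : ℕ} (h : IGDerivable G Γ F n) (W : Multiset Fm) :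
    IGDerivable G (W + Γ) F n := by
  simpa using h.rename_add id (by simp) W

lemma rename_eigenvariable {B : Fm} {Γ : Multiset Fm} {F : Fm} {n c : ℕ}
    (h : IGDerivable G (B.inst (.const c) ::ₘ Γ) F n) (hc : FreshSeq c (Fm.ex B ::ₘ Γ) {F})
    (hG : ¬ G.constIn c) (e : ℕ) : IGDerivable G (B.inst (.const e) ::ₘ Γ) F n := by
  have hcB : ¬ B.constIn c := hc.1 (Fm.ex B) (Multiset.mem_cons_self _ _)
  have hcΓ : ∀ X ∈ Γ, ¬ X.constIn c := fun X hX => hc.1 X (Multiset.mem_cons_of_mem hX)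
  have := h.rename_add (Function.update id c e) (by simp [Fm.rename_update hG]) 0
  rwa [zero_add, Multiset.map_cons, Fm.rename_update_inst hcB,
    map_rename_update hcΓ, Fm.rename_update (hc.2 F (Multiset.mem_singleton_self F)),
    Fm.rename_id, id, Multiset.map_id, id] at this

end IGDerivable

def OGProvable (G : Fm) (Γ : Multiset Fm) (F : Fm) : Prop := ∃ q : IGProof G Γ F, q.isOG

namespace OGProvable

variable {G : Fm} {Γ : Multiset Fm} {F B D : Fm}

lemma ax (h : AxSeq Γ {F}) : OGProvable G Γ F := ⟨.ax h, by simp only [IGProof.isOG]⟩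

lemma andR : OGProvable G Γ B → OGProvable G Γ D → OGProvable G Γ (B.conj D)
  | ⟨p, hp⟩, ⟨q, hq⟩ => ⟨.andR p q, by simp only [IGProof.isOG]; exact ⟨hp, hq⟩⟩

lemma orR1 : OGProvable G Γ B → OGProvable G Γ (B.disj D)
  | ⟨p, hp⟩ => ⟨.orR1 p, by simp only [IGProof.isOG]; exact hp⟩

lemma orR2 : OGProvable G Γ D → OGProvable G Γ (B.disj D)
  | ⟨p, hp⟩ => ⟨.orR2 p, by simp only [IGProof.isOG]; exact hp⟩

lemma impR : OGProvable G (B ::ₘ Γ) D → OGProvable G Γ (B.imp D)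
  | ⟨p, hp⟩ => ⟨.impR p, by simp only [IGProof.isOG]; exact hp⟩

lemma exR (t : Tm) : OGProvable G Γ (B.inst t) → OGProvable G Γ (Fm.ex B)
  | ⟨p, hp⟩ => ⟨.exR t p, by simp only [IGProof.isOG]; exact hp⟩

lemma botR (hF : F.neutral) : OGProvable G Γ Fm.bot → OGProvable G Γ F
  | ⟨p, hp⟩ => ⟨.botR p, by simp only [IGProof.isOG]; exact ⟨hF, hp⟩⟩

lemma resG (hF : F.neutral) : OGProvable G Γ G → OGProvable G Γ F
  | ⟨p, hp⟩ => ⟨.resG p, by simp only [IGProof.isOG]; exact ⟨hF, hp⟩⟩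

lemma andL (hF : F.neutral) :
    OGProvable G (B ::ₘ D ::ₘ B.conj D ::ₘ Γ) F → OGProvable G (B.conj D ::ₘ Γ) F
  | ⟨p, hp⟩ => ⟨.andL p, by simp only [IGProof.isOG]; exact ⟨hF, hp⟩⟩

lemma allL (hF : F.neutral) (t : Tm) :
    OGProvable G (B.inst t ::ₘ Fm.all B ::ₘ Γ) F → OGProvable G (Fm.all B ::ₘ Γ) F
  | ⟨p, hp⟩ => ⟨.allL t p, by simp only [IGProof.isOG]; exact ⟨hF, hp⟩⟩

lemma impL (hF : F.neutral) : OGProvable G (B.imp D ::ₘ Γ) B → OGProvable G (D ::ₘ Γ) F →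
    OGProvable G (B.imp D ::ₘ Γ) F
  | ⟨p, hp⟩, ⟨q, hq⟩ => ⟨.impL p q, by simp only [IGProof.isOG]; exact ⟨hF, hp, hq⟩⟩

lemma orLG (hF : F.neutral) : OGProvable G (B ::ₘ Γ) F → OGProvable G (D ::ₘ Γ) G →
    OGProvable G (B.disj D ::ₘ Γ) F
  | ⟨p, hp⟩, ⟨q, hq⟩ => ⟨.orLG p q, by simp only [IGProof.isOG]; exact ⟨hF, hp, hq⟩⟩

lemma exL (hF : F.neutral) (c : ℕ) (hc : FreshSeq c (Fm.ex B ::ₘ Γ) {F})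
    (hG : ¬ G.constIn c) :
    OGProvable G (B.inst (.const c) ::ₘ Γ) F → OGProvable G (Fm.ex B ::ₘ Γ) F
  | ⟨p, hp⟩ => ⟨.exL c hc hG p, by simp only [IGProof.isOG]; exact ⟨hF, hp⟩⟩

lemma of_covers_axSeq {Δ : Multiset Fm} (h : AxSeq Γ {F}) (hΔ : Covers Δ Γ) :
    OGProvable G Δ F := by
  rcases h with h | ⟨A, hA, hAΓ, hAF⟩
  · exact ax (Or.inl h)
  · obtain ⟨X, hXΔ, hXA⟩ := hΔ A hAΓ
    rw [hXA.eq_of_neutral hA.symm] at hXΔ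
    exact ax (Or.inr ⟨A, hA, hXΔ, hAF⟩)

/-- Only the left disjunct and the witness `const 0` are ever chosen: the neutral leaves are
provable whatever they are. -/
theorem of_forall_neutral {Δ : Multiset Fm} {F : Fm} (hF : GFm F)
    (H : ∀ Δ', Δ ⊆ Δ' → ∀ F₀ : Fm, F₀.neutral → OGProvable G Δ' F₀) :
    OGProvable G Δ F := by
  induction hc : F.complexity using Nat.strong_induction_on generalizing F Δ with
  | _ n ih =>
  subst hc
  cases hF with
  | top => exact ax (Or.inl (Multiset.mem_singleton_self _))
  | bot => exact H Δ (Multiset.Subset.refl Δ) _ (Or.inr rfl)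
  | atom => exact H Δ (Multiset.Subset.refl Δ) _ (Or.inl trivial)
  | conj ha hb =>
      exact andR (ih _ (by simp [Fm.complexity]) ha H rfl)
        (ih _ (by simp [Fm.complexity]) hb H rfl)
  | disj ha _ => exact orR1 (ih _ (by simp [Fm.complexity]) ha H rfl)
  | imp _ hb =>
      exact impR (ih _ (by simp [Fm.complexity]) hb
        (fun Δ' h => H Δ' (Multiset.Subset.trans (Multiset.subset_cons _ _) h)) rfl)
  | ex ha => exact exR (.const 0) (ih _ (by simp [Fm.complexity]) (ha.inst _) H rfl)

end OGProvable

/-- The RESTART invariant for a node `Γ → F` of size `s` in a derivation of a root sequent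
`Γᵣ → G`, processed in a context `Δ` covering `Γ`: a smaller derivation of a weakening
`W + Γ → F`, grafted in place of the node, yields a smaller derivation of the root, from which
induction on size produces an O_G-proof of `G` in any context covering `W` and `Δ`. -/
def Restartable (G : Fm) (Δ Γ : Multiset Fm) (F : Fm) (s : ℕ) : Prop :=
  ∀ (W : Multiset Fm) (n : ℕ), n < s → IGDerivable G (W + Γ) F n → (∀ Y ∈ W, DFm Y) →
    ∀ Δ', Covers Δ' W → Covers Δ' Δ → OGProvable G Δ' G

namespace Restartable

variable {G : Fm} {Δ Γ : Multiset Fm} {F : Fm} {s : ℕ}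

lemma mono (h : Restartable G Δ Γ F s) {Δ₁ : Multiset Fm} (hΔ : Covers Δ₁ Δ) :
    Restartable G Δ₁ Γ F s :=
  fun W n hn hd hW Δ' h₁ h₂ => h W n hn hd hW Δ' h₁ (h₂.trans hΔ)

lemma of_premise (h : Restartable G Δ Γ F s) {Γ₁ : Multiset Fm} {F₁ : Fm} {s₁ : ℕ}
    (hf : ∀ W n, n < s₁ → IGDerivable G (W + Γ₁) F₁ n →
      ∃ m < s, IGDerivable G (W + Γ) F m) :
    Restartable G Δ Γ₁ F₁ s₁ :=
  fun W n hn hd => let ⟨m, hm, hd'⟩ := hf W n hn hd; h W m hm hd'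

lemma restart_cons (h : Restartable G Δ Γ F s) {A : Fm} {n : ℕ}
    (hd : IGDerivable G (A ::ₘ Γ) F n) (hn : n < s) (hA : DFm A) {Δ' : Multiset Fm}
    (hAΔ' : ∃ x ∈ Δ', x.ge A) (hΔ' : Covers Δ' Δ) : OGProvable G Δ' G :=
  h {A} n hn (by rwa [Multiset.singleton_add]) (by simpa using hA) Δ'
    (by simpa [Covers] using hAΔ') hΔ'

lemma restart_weaken {P A : Fm} {n : ℕ} (h : Restartable G Δ (P ::ₘ Γ) F s)
    (hd : IGDerivable G (A ::ₘ Γ) F n) (hn : n < s) (hA : DFm A) {Δ' : Multiset Fm}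
    (hAΔ' : ∃ x ∈ Δ', x.ge A) (hΔ' : Covers Δ' Δ) : OGProvable G Δ' G := by
  have hd' := hd.weaken {P}
  rw [Multiset.singleton_add, Multiset.cons_swap] at hd'
  exact h.restart_cons hd' hn hA hAΔ' hΔ'

lemma ogProvable_of_neutral (h : Restartable G Δ Γ F s) (hΔ : Covers Δ Γ) (hF : GFm F)
    (H : ∀ Δ', Covers Δ' Γ → Restartable G Δ' Γ F s →
      ∀ F₀ : Fm, F₀.neutral → OGProvable G Δ' F₀) :
    OGProvable G Δ F :=
  OGProvable.of_forall_neutral hF fun Δ' hsub =>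
    H Δ' ((Covers.of_subset hsub).trans hΔ) (h.mono (.of_subset hsub))

variable {B D : Fm} {n : ℕ}

lemma ogProvable_contrL (h : Restartable G Δ (B ::ₘ Γ) F (n + 1)) (hΔ : Covers Δ (B ::ₘ Γ))
    (hd : IGDerivable G (B ::ₘ B ::ₘ Γ) F n) (hB : DFm B) (hF : GFm F) : OGProvable G Δ F :=
  h.ogProvable_of_neutral hΔ hF fun _ hΔ h _ hF₀ =>
    .resG hF₀ (h.restart_cons hd (by omega) hB (hΔ B (Multiset.mem_cons_self _ _)) (.refl _))

lemma ogProvable_andL (h : Restartable G Δ (B.conj D ::ₘ Γ) F (n + 1))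
    (hΔ : Covers Δ (B.conj D ::ₘ Γ))
    (hd : IGDerivable G (B ::ₘ D ::ₘ B.conj D ::ₘ Γ) F n) (hBD : DFm (B.conj D))
    (hF : GFm F) :
    OGProvable G Δ F := by
  obtain ⟨hB, hD⟩ : DFm B ∧ DFm D := by cases hBD; exact ⟨‹_›, ‹_›⟩
  refine h.ogProvable_of_neutral hΔ hF fun Δ hΔ h F₀ hF₀ => ?_
  obtain ⟨X, hX, hXP⟩ := hΔ _ (Multiset.mem_cons_self _ _)
  cases hXP
  obtain ⟨Δ₀, rfl⟩ := Multiset.exists_cons_of_mem hX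
  refine .andL hF₀ (.resG hF₀ (h (B ::ₘ D ::ₘ 0) n (by omega)
    (by rwa [Multiset.cons_add, Multiset.cons_add, zero_add]) (by simp [hB, hD]) _ ?_ ?_))
  · exact .of_subset (by simp [Multiset.cons_subset])
  · exact .of_subset (Multiset.Subset.trans (Multiset.subset_cons _ _) (Multiset.subset_cons _ _))

lemma ogProvable_allL {t : Tm} (h : Restartable G Δ (Fm.all B ::ₘ Γ) F (n + 1))
    (hΔ : Covers Δ (Fm.all B ::ₘ Γ))
    (hd : IGDerivable G (B.inst t ::ₘ Fm.all B ::ₘ Γ) F n) (hB : DFm (Fm.all B)) (hF : GFm F) :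
    OGProvable G Δ F := by
  have hBt : DFm (B.inst t) := by cases hB; exact DFm.inst ‹_› t
  refine h.ogProvable_of_neutral hΔ hF fun Δ hΔ h F₀ hF₀ => ?_
  obtain ⟨X, hX, hXP⟩ := hΔ _ (Multiset.mem_cons_self _ _)
  cases hXP
  obtain ⟨Δ₀, rfl⟩ := Multiset.exists_cons_of_mem hX
  exact .allL hF₀ t (.resG hF₀ (h.restart_cons hd (by omega) hBt
    ⟨_, Multiset.mem_cons_self _ _, .refl _⟩ (.of_subset (Multiset.subset_cons _ _))))

lemma ogProvable_impL {m : ℕ} (h : Restartable G Δ (B.imp D ::ₘ Γ) F (m + n + 1))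
    (hΔ : Covers Δ (B.imp D ::ₘ Γ)) (hd₂ : IGDerivable G (D ::ₘ Γ) F n)
    (hBD : DFm (B.imp D)) (hF : GFm F)
    (ih₁ : ∀ Δ, Covers Δ (B.imp D ::ₘ Γ) → Restartable G Δ (B.imp D ::ₘ Γ) B m →
      OGProvable G Δ B) :
    OGProvable G Δ F := by
  have hD : DFm D := by cases hBD; assumption
  refine h.ogProvable_of_neutral hΔ hF fun Δ hΔ h F₀ hF₀ => ?_
  have restart : ∀ Δ', (∃ x ∈ Δ', x.ge D) → Covers Δ' Δ → OGProvable G Δ' G :=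
    fun Δ' hx hΔ' => h.restart_weaken hd₂ (by omega) hD hx hΔ'
  obtain ⟨X, hX, hXP⟩ := hΔ _ (Multiset.mem_cons_self _ _)
  cases hXP with
  | refl =>
      obtain ⟨Δ₀, rfl⟩ := Multiset.exists_cons_of_mem hX
      refine .impL hF₀ (ih₁ _ hΔ (h.of_premise fun W k hk hd => ⟨k + n + 1, by omega, ?_⟩))
        (.resG hF₀ (restart _ ⟨D, Multiset.mem_cons_self _ _, .refl D⟩
          (.cons_of_ge (.imp (.refl D)))))
      have hd₂W := hd₂.weaken W
      rw [Multiset.add_cons] at hd hd₂W ⊢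
      exact .impL hd hd₂W
  | imp hXD => exact .resG hF₀ (restart Δ ⟨X, hX, hXD⟩ (.refl Δ))

lemma ogProvable_orLG {m : ℕ} (h : Restartable G Δ (B.disj D ::ₘ Γ) F (m + n + 1))
    (hΔ : Covers Δ (B.disj D ::ₘ Γ)) (hd₁ : IGDerivable G (B ::ₘ Γ) F m)
    (hd₂ : IGDerivable G (D ::ₘ Γ) G n) (hBD : DFm (B.disj D)) (hF : GFm F) :
    OGProvable G Δ F := by
  obtain ⟨hB, hD⟩ : DFm B ∧ DFm D := by cases hBD; exact ⟨‹_›, ‹_›⟩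
  have := hd₁.pos
  refine h.ogProvable_of_neutral hΔ hF fun Δ hΔ h F₀ hF₀ => ?_
  have restart₁ : ∀ Δ', (∃ x ∈ Δ', x.ge B) → Covers Δ' Δ → OGProvable G Δ' G :=
    fun Δ' hx hΔ' => h.restart_weaken hd₁ (by omega) hB hx hΔ'
  have restart₂ : ∀ Δ', (∃ x ∈ Δ', x.ge D) → Covers Δ' Δ → OGProvable G Δ' G :=
    fun Δ' hx hΔ' => h.restart_weaken hd₂.resG (by omega) hD hx hΔ'
  obtain ⟨X, hX, hXP⟩ := hΔ _ (Multiset.mem_cons_self _ _)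
  cases hXP with
  | refl =>
      obtain ⟨Δ₀, rfl⟩ := Multiset.exists_cons_of_mem hX
      exact .orLG hF₀
        (.resG hF₀ (restart₁ _ ⟨B, Multiset.mem_cons_self _ _, .refl B⟩
          (.cons_of_ge (.disjl (.refl B)))))
        (restart₂ _ ⟨D, Multiset.mem_cons_self _ _, .refl D⟩ (.cons_of_ge (.disjr (.refl D))))
  | disjl hXB => exact .resG hF₀ (restart₁ Δ ⟨X, hX, hXB⟩ (.refl Δ))
  | disjr hXD => exact .resG hF₀ (restart₂ Δ ⟨X, hX, hXD⟩ (.refl Δ))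

lemma ogProvable_exL {c : ℕ} (h : Restartable G Δ (Fm.ex B ::ₘ Γ) F (n + 1))
    (hΔ : Covers Δ (Fm.ex B ::ₘ Γ)) (hc : FreshSeq c (Fm.ex B ::ₘ Γ) {F})
    (hGc : ¬ G.constIn c) (hd : IGDerivable G (B.inst (.const c) ::ₘ Γ) F n)
    (hB : DFm (Fm.ex B)) (hF : GFm F) :
    OGProvable G Δ F := by
  have hB' : DFm B := by cases hB; assumption
  refine h.ogProvable_of_neutral hΔ hF fun Δ hΔ h F₀ hF₀ => ?_
  have restart : ∀ e Δ', (∃ x ∈ Δ', x.ge (B.inst (.const e))) → Covers Δ' Δ →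
      OGProvable G Δ' G :=
    fun e Δ' hx hΔ' =>
      h.restart_weaken (hd.rename_eigenvariable hc hGc e) (by omega) (hB'.inst _) hx hΔ'
  obtain ⟨X, hX, hXP⟩ := hΔ _ (Multiset.mem_cons_self _ _)
  cases hXP with
  | refl =>
      obtain ⟨Δ₀, rfl⟩ := Multiset.exists_cons_of_mem hX
      obtain ⟨e, he⟩ := exists_fresh_const (G ::ₘ F₀ ::ₘ Fm.ex B ::ₘ Δ₀)
      refine .exL hF₀ e ⟨fun Y hY => he Y ?_, fun Y hY => he Y ?_⟩ (he G (by simp))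
        (.resG hF₀ (restart e _ ⟨_, Multiset.mem_cons_self _ _, .refl _⟩
          (.cons_of_ge (.ex e (.refl _)))))
      · exact Multiset.mem_cons_of_mem (Multiset.mem_cons_of_mem hY)
      · simp [Multiset.mem_singleton.1 hY]
  | ex d hXd => exact .resG hF₀ (restart d Δ ⟨X, hX, hXd⟩ (.refl Δ))

end Restartable

namespace IGDerivable

variable {G : Fm} {Γ : Multiset Fm} {F : Fm} {n : ℕ}

theorem ogProvable (hG : GFm G) (hd : IGDerivable G Γ F n) (hΓ : ∀ X ∈ Γ, DFm X) (hF : GFm F)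
    {Δ : Multiset Fm} (hΔ : Covers Δ Γ) (hR : Restartable G Δ Γ F n) : OGProvable G Δ F := by
  induction hd generalizing Δ with
  | ax h => exact .of_covers_axSeq h hΔ
  | contrL hd _ => exact hR.ogProvable_contrL hΔ hd (hΓ _ (Multiset.mem_cons_self _ _)) hF
  | andL hd _ => exact hR.ogProvable_andL hΔ hd (hΓ _ (Multiset.mem_cons_self _ _)) hF
  | allL t hd _ => exact hR.ogProvable_allL hΔ hd (hΓ _ (Multiset.mem_cons_self _ _)) hF
  | exL c hc hGc hd _ =>
      exact hR.ogProvable_exL hΔ hc hGc hd (hΓ _ (Multiset.mem_cons_self _ _)) hF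
  | orLG hd₁ hd₂ _ _ =>
      exact hR.ogProvable_orLG hΔ hd₁ hd₂ (hΓ _ (Multiset.mem_cons_self _ _)) hF
  | @impL B D _ _ _ _ _ hd₂ ih₁ _ =>
      have hBD : DFm (B.imp D) := hΓ _ (Multiset.mem_cons_self _ _)
      have hB : GFm B := by cases hBD; assumption
      exact hR.ogProvable_impL hΔ hd₂ hBD hF fun Δ hΔ hR => ih₁ hΓ hB hΔ hR
  | botR _ ih =>
      exact hR.ogProvable_of_neutral hΔ hF fun Δ hΔ hR F₀ hF₀ => .botR hF₀
        (ih hΓ .bot hΔ (hR.of_premise fun W k hk hd => ⟨k + 1, by omega, hd.botR⟩))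
  | resG _ ih =>
      exact hR.ogProvable_of_neutral hΔ hF fun Δ hΔ hR F₀ hF₀ => .resG hF₀
        (ih hΓ hG hΔ (hR.of_premise fun W k hk hd => ⟨k + 1, by omega, hd.resG⟩))
  | andR hd₁ hd₂ ih₁ ih₂ =>
      cases hF with
      | conj hB hD =>
        exact .andR
          (ih₁ hΓ hB hΔ (hR.of_premise fun W k hk hd =>
            ⟨_, by omega, hd.andR (hd₂.weaken W)⟩))
          (ih₂ hΓ hD hΔ (hR.of_premise fun W k hk hd =>
            ⟨_, by omega, (hd₁.weaken W).andR hd⟩))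
  | orR1 _ ih =>
      cases hF with
      | disj hB _ =>
        exact .orR1 (ih hΓ hB hΔ (hR.of_premise fun W k hk hd => ⟨_, by omega, hd.orR1⟩))
  | orR2 _ ih =>
      cases hF with
      | disj _ hD =>
        exact .orR2 (ih hΓ hD hΔ (hR.of_premise fun W k hk hd => ⟨_, by omega, hd.orR2⟩))
  | exR t _ ih =>
      cases hF with
      | ex hB =>
        exact .exR t
          (ih hΓ (hB.inst t) hΔ (hR.of_premise fun W k hk hd => ⟨_, by omega, hd.exR t⟩))
  | impR _ ih =>
      cases hF with
      | imp hB hD =>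
        refine .impR (ih (Multiset.forall_mem_cons.2 ⟨hB, hΓ⟩) hD
          (.cons ⟨_, Multiset.mem_cons_self _ _, .refl _⟩
            ((Covers.of_subset (Multiset.subset_cons _ _)).trans hΔ))
          ((hR.mono (.of_subset (Multiset.subset_cons _ _))).of_premise
            fun W k hk hd => ⟨k + 1, by omega, ?_⟩))
        rw [Multiset.add_cons] at hd
        exact hd.impR
  | allR => cases hF

theorem ogProvable_goal (hG : GFm G) (hd : IGDerivable G Γ G n) (hΓ : ∀ X ∈ Γ, DFm X)
    {Δ : Multiset Fm} (hΔ : Covers Δ Γ) : OGProvable G Δ G := by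
  induction n using Nat.strong_induction_on generalizing Γ Δ with
  | _ n ih =>
  refine hd.ogProvable hG hΓ hG hΔ fun W m hm hd' hW Δ' hΔ'W hΔ'Δ =>
    ih m hm hd' (fun X hX => ?_) (hΔ'W.add (hΔ'Δ.trans hΔ))
  exact (Multiset.mem_add.1 hX).elim (hW X) (hΓ X)

end IGDerivable

/-- Lemma `secondmodified`: let `G` be a G-formula and `Γ`
a multiset of D-formulas. If `Γ → G` has an I_G-proof containing no
occurrences of the ∨-L rule, then it has an O_G-proof. -/
theorem statement_15 (Γ : Multiset Fm) (G : Fm) (hΓ : ∀ X ∈ Γ, DFm X) (hG : GFm G)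
    (p : IGProof G Γ G) (hp : p.orLCount = 0) :
    ∃ q : IGProof G Γ G, q.isOG :=
  (p.igDerivable hp).ogProvable_goal hG hΓ (.refl Γ)
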